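/- arXiv:2302.03317 — 2 statements merged into one kernel-verified Lean document; each statement's English description precedes it below -/
import Mathlib

section
/- Let D : ℕ → ℝ satisfy D(n) ≤ D(n/2) + c·(k + √(n·k·log k)) for n ≥ N₀ and D(n) ≤ c·N₀ for n < N₀, where N₀ = k², k ≥ 2 and c > 0. Then there exists a constant C (depending on c) such that D(n) ≤ C·√(n·k·log k) for all n ≥ N₀. -/
/-- Depth recurrence of ParRoughScatter (Lemma 7): if `D(n) ≤ D(n/2) + c(k + √(nk log k))`
for `n ≥ N₀` and `D(n) ≤ c·N₀` for `n < N₀`, with `N₀ = k²`, `k ≥ 2`, `c > 0`, then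
`D(n) ≤ C·√(nk log k)` for all `n ≥ N₀`, for some constant `C`. -/
theorem stmt_9 (k : ℕ) (hk : 2 ≤ k) (c : ℝ) (hc : 0 < c) (D : ℕ → ℝ)
    (hrec : ∀ n : ℕ, k ^ 2 ≤ n →
      D n ≤ D (n / 2) + c * ((k : ℝ) + Real.sqrt ((n : ℝ) * k * Real.log k)))
    (hbase : ∀ n : ℕ, n < k ^ 2 → D n ≤ c * (k : ℝ) ^ 2) :
    ∃ C : ℝ, 0 < C ∧ ∀ n : ℕ, k ^ 2 ≤ n →
      D n ≤ C * Real.sqrt ((n : ℝ) * k * Real.log k) := by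
  set lk := Real.log k with hlkdef
  have hk2 : (2:ℝ) ≤ (k:ℝ) := by exact_mod_cast hk
  have hkpos : (0:ℝ) < k := by linarith
  have hlog2 : Real.log 2 ≤ lk := Real.log_le_log (by norm_num) hk2
  have hlog2pos : 0 < Real.log 2 := Real.log_pos (by norm_num)
  have hlkpos : 0 < lk := lt_of_lt_of_le hlog2pos hlog2
  set s := Real.sqrt ((k:ℝ) * lk) with hsdef
  have hklk1 : (1:ℝ) ≤ (k:ℝ) * lk := by
    have hexp : Real.exp 1 ≤ 4 := le_of_lt (lt_of_lt_of_le Real.exp_one_lt_d9 (by norm_num))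
    have h1 : (1:ℝ) ≤ Real.log 4 := (Real.le_log_iff_exp_le (by norm_num)).mpr hexp
    have h2 : Real.log 4 = 2 * Real.log 2 := by
      rw [show (4:ℝ) = 2^2 by norm_num, Real.log_pow]; push_cast; ring
    nlinarith
  have hs1 : 1 ≤ s := by
    rw [hsdef, show (1:ℝ) = Real.sqrt 1 by simp]
    exact Real.sqrt_le_sqrt hklk1
  have hspos : 0 < s := lt_of_lt_of_le one_pos hs1
  set r := (Real.sqrt 2)⁻¹ with hrdef
  have hsqrt2 : 1 < Real.sqrt 2 := by
    rw [show (1:ℝ) = Real.sqrt 1 by simp]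
    exact Real.sqrt_lt_sqrt (by norm_num) (by norm_num)
  have hrpos : 0 < r := by positivity
  have hrlt : r < 1 := by
    rw [hrdef, inv_lt_one_iff₀]; right; exact hsqrt2
  set L := 2 * c * s with hLdef
  have hLpos : 0 < L := by positivity
  set M := max (c * k + L) (L / (1 - r)) with hMdef
  have hM1 : c * k + L ≤ M := le_max_left _ _
  have hM2 : L / (1 - r) ≤ M := le_max_right _ _
  have hMpos : 0 < M := lt_of_lt_of_le (by positivity) hM1
  have key : ∀ n : ℕ, k ^ 2 ≤ n → D n ≤ M * Real.sqrt n := by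
    intro n
    induction n using Nat.strong_induction_on with
    | _ n ih =>
      intro hn
      have hnR : ((k:ℝ))^2 ≤ (n:ℝ) := by exact_mod_cast hn
      have hksqrt : (k:ℝ) ≤ Real.sqrt n := by
        calc (k:ℝ) = Real.sqrt ((k:ℝ)^2) := (Real.sqrt_sq (by positivity)).symm
          _ ≤ _ := Real.sqrt_le_sqrt hnR
      have hsqrtn0 : (0:ℝ) ≤ Real.sqrt n := Real.sqrt_nonneg _
      have hsqrtnpos : (0:ℝ) < Real.sqrt n := lt_of_lt_of_le hkpos hksqrt
      have hsplit : Real.sqrt ((n:ℝ) * k * lk) = Real.sqrt n * s := by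
        rw [mul_assoc, Real.sqrt_mul (by positivity)]
      have hadd : c * ((k:ℝ) + Real.sqrt ((n:ℝ) * k * lk)) ≤ L * Real.sqrt n := by
        rw [hsplit]
        have h1 : (k:ℝ) ≤ s * Real.sqrt n := by
          calc (k:ℝ) ≤ Real.sqrt n := hksqrt
            _ = 1 * Real.sqrt n := (one_mul _).symm
            _ ≤ s * Real.sqrt n := mul_le_mul_of_nonneg_right hs1 hsqrtn0
        have h2 : c * (k:ℝ) ≤ c * (s * Real.sqrt n) := mul_le_mul_of_nonneg_left h1 hc.le
        nlinarith [h2]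
      have hrecn := hrec n hn
      by_cases hhalf : k ^ 2 ≤ n / 2
      · have ihn := ih (n / 2) (Nat.div_lt_self (lt_of_lt_of_le (pow_pos (show 0 < k by omega) 2) hn) (by norm_num)) hhalf
        have hcast : ((n / 2 : ℕ) : ℝ) ≤ (n:ℝ) / 2 := Nat.cast_div_le
        have hhr : Real.sqrt ((n / 2 : ℕ) : ℝ) ≤ r * Real.sqrt n := by
          have h1 : Real.sqrt ((n / 2 : ℕ) : ℝ) ≤ Real.sqrt ((n:ℝ) / 2) :=
            Real.sqrt_le_sqrt hcast
          rw [Real.sqrt_div (by positivity) 2, div_eq_inv_mul] at h1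
          exact h1
        have hstep : D (n / 2) ≤ M * (r * Real.sqrt n) :=
          le_trans ihn (mul_le_mul_of_nonneg_left hhr hMpos.le)
        have hML : L ≤ M * (1 - r) := by
          rw [div_le_iff₀ (by linarith)] at hM2
          linarith
        calc D n ≤ D (n / 2) + c * ((k:ℝ) + Real.sqrt ((n:ℝ) * k * lk)) := hrecn
          _ ≤ M * (r * Real.sqrt n) + L * Real.sqrt n := by linarith
          _ = (M * r + L) * Real.sqrt n := by ring
          _ ≤ M * Real.sqrt n := by
              have h := hML
              rw [mul_sub, mul_one] at h
              exact mul_le_mul_of_nonneg_right (by linarith) hsqrtn0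
      · have hb := hbase (n / 2) (lt_of_not_ge hhalf)
        have hck : c * (k:ℝ)^2 ≤ c * k * Real.sqrt n := by
          calc c * (k:ℝ)^2 = c * k * k := by ring
            _ ≤ c * k * Real.sqrt n :=
              mul_le_mul_of_nonneg_left hksqrt (by positivity)
        calc D n ≤ D (n / 2) + c * ((k:ℝ) + Real.sqrt ((n:ℝ) * k * lk)) := hrecn
          _ ≤ c * k * Real.sqrt n + L * Real.sqrt n := by linarith
          _ = (c * k + L) * Real.sqrt n := by ring
          _ ≤ M * Real.sqrt n := mul_le_mul_of_nonneg_right hM1 hsqrtn0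
  refine ⟨M / s, by positivity, fun n hn => ?_⟩
  have hsplit : Real.sqrt ((n:ℝ) * k * lk) = Real.sqrt n * s := by
    rw [mul_assoc, Real.sqrt_mul (by positivity)]
  calc D n ≤ M * Real.sqrt n := key n hn
    _ = M / s * Real.sqrt ((n:ℝ) * k * lk) := by
        rw [hsplit]; field_simp
end

section
/- Let W : ℕ → ℝ satisfy W(n) ≤ 2·W(n/2) + c·(k + √(n·k·log k)) for n ≥ N₀ and W(n) ≤ c·N₀ for n < N₀, where N₀ = k², k ≥ 2, c > 0. Then there exists a constant C (depending on c) with W(n) ≤ C·n for all n ≥ 1. -/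
/-- Work recurrence of ParRoughScatter (Lemma 7): if `W(n) ≤ 2·W(n/2) + c(k + √(nk log k))`
for `n ≥ N₀` and `W(n) ≤ c·N₀` for `n < N₀`, with `N₀ = k²`, `k ≥ 2`, `c > 0`, then
`W(n) ≤ C·n` for all `n ≥ 1`, for some constant `C`. -/
theorem stmt_10 (k : ℕ) (hk : 2 ≤ k) (c : ℝ) (hc : 0 < c) (W : ℕ → ℝ)
    (hrec : ∀ n : ℕ, k ^ 2 ≤ n →
      W n ≤ 2 * W (n / 2) + c * ((k : ℝ) + Real.sqrt ((n : ℝ) * k * Real.log k)))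
    (hbase : ∀ n : ℕ, n < k ^ 2 → W n ≤ c * (k : ℝ) ^ 2) :
    ∃ C : ℝ, 0 < C ∧ ∀ n : ℕ, 1 ≤ n → W n ≤ C * (n : ℝ) := by
  have hk1 : (1:ℝ) ≤ (k:ℝ) := by exact_mod_cast le_trans one_le_two hk
  have hlogk : 0 ≤ Real.log k := Real.log_nonneg hk1
  set a : ℝ := c * ((k:ℝ) + Real.sqrt ((k:ℝ) * Real.log k)) with ha
  have ha0 : 0 < a := by
    have := Real.sqrt_nonneg ((k:ℝ) * Real.log k)
    have : (0:ℝ) < (k:ℝ) + Real.sqrt ((k:ℝ) * Real.log k) := by linarith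
    exact mul_pos hc this
  set D : ℝ := 5 * a with hD
  have hD0 : 0 < D := by rw [hD]; linarith
  set C : ℝ := D + c * (k:ℝ)^2 with hC
  have hC0 : 0 < C := by
    have : 0 < c * (k:ℝ)^2 := by positivity
    rw [hC]; linarith
  have hk2n : (4:ℕ) ≤ k ^ 2 := by nlinarith
  have key : ∀ n : ℕ, 1 ≤ n → W n ≤ C * n - D * Real.sqrt n := by
    intro n
    induction n using Nat.strong_induction_on with
    | _ n ih =>
      intro hn1
      have hn1R : (1:ℝ) ≤ (n:ℝ) := by exact_mod_cast hn1
      have hsn0 : 0 ≤ Real.sqrt n := Real.sqrt_nonneg _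
      have hsnn : Real.sqrt n ≤ (n:ℝ) := by
        nlinarith [Real.sq_sqrt (show (0:ℝ) ≤ (n:ℝ) by linarith), hsn0]
      by_cases hbig : k ^ 2 ≤ n
      · -- recursive case
        have hn4 : 4 ≤ n := le_trans hk2n hbig
        set m := n / 2 with hm
        have hm1 : 1 ≤ m := by omega
        have hmlt : m < n := by omega
        have ihm := ih m hmlt hm1
        have hrecn := hrec n hbig
        have hsn1 : 1 ≤ Real.sqrt n := by
          rw [show (1:ℝ) = Real.sqrt 1 by simp]
          exact Real.sqrt_le_sqrt hn1R
        -- bound the additive term by a * √n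
        have hsplit : Real.sqrt ((n:ℝ) * k * Real.log k)
            = Real.sqrt n * Real.sqrt ((k:ℝ) * Real.log k) := by
          rw [mul_assoc, Real.sqrt_mul (by positivity)]
        have hadd : c * ((k:ℝ) + Real.sqrt ((n:ℝ) * k * Real.log k)) ≤ a * Real.sqrt n := by
          rw [hsplit, ha]
          have hq := Real.sqrt_nonneg ((k:ℝ) * Real.log k)
          have h1 : (k:ℝ) + Real.sqrt n * Real.sqrt ((k:ℝ) * Real.log k)
              ≤ ((k:ℝ) + Real.sqrt ((k:ℝ) * Real.log k)) * Real.sqrt n := by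
            nlinarith
          nlinarith
        -- floor bound : (3/8) n ≤ m
        have hmN : 3 * n ≤ 8 * m := by omega
        have hmR : (3/8 : ℝ) * n ≤ (m:ℝ) := by
          have : (3:ℝ) * n ≤ 8 * m := by exact_mod_cast hmN
          linarith
        have hsm : Real.sqrt ((3:ℝ)/8) * Real.sqrt n ≤ Real.sqrt m := by
          rw [← Real.sqrt_mul (by norm_num)]
          exact Real.sqrt_le_sqrt hmR
        have h32 : (6/5 : ℝ) ≤ 2 * Real.sqrt (3/8) := by
          have h := Real.sq_sqrt (show (0:ℝ) ≤ 3/8 by norm_num)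
          nlinarith [Real.sqrt_nonneg ((3:ℝ)/8)]
        have hsqrt : (6/5 : ℝ) * Real.sqrt n ≤ 2 * Real.sqrt m := by
          have h4 := mul_le_mul_of_nonneg_right h32 hsn0
          linarith
        have hcm : 2 * (m:ℝ) ≤ (n:ℝ) := by
          have : 2 * m ≤ n := by omega
          exact_mod_cast this
        have t1 : C * (2 * (m:ℝ)) ≤ C * n := mul_le_mul_of_nonneg_left hcm hC0.le
        have t2 : D * ((6/5:ℝ) * Real.sqrt n) ≤ D * (2 * Real.sqrt m) :=
          mul_le_mul_of_nonneg_left hsqrt hD0.le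
        have t3 : a * Real.sqrt n = (1/5) * (D * Real.sqrt n) := by rw [hD]; ring
        linarith [ihm, hrecn, hadd, t1, t2, t3]
      · -- base case
        push_neg at hbig
        have hb := hbase n hbig
        have hck2 : 0 < c * (k:ℝ)^2 := by positivity
        have : D * Real.sqrt n ≤ D * n := mul_le_mul_of_nonneg_left hsnn hD0.le
        have hCn : C * n = D * n + (c * (k:ℝ)^2) * n := by rw [hC]; ring
        have h5 : c * (k:ℝ)^2 ≤ (c * (k:ℝ)^2) * n := le_mul_of_one_le_right hck2.le hn1R
        linarith
  exact ⟨C, hC0, fun n hn => by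
    have h := key n hn
    have := Real.sqrt_nonneg (n:ℝ)
    nlinarith⟩
end
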